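/- arXiv:2208.14422 — 2 statements merged into one kernel-verified Lean document; each statement's English description precedes it below -/
import Mathlib

section
/- Fix an integer d ≥ 2. Consider systems A'₁, A₁, A'₂, A₂, Ã₁, B₁, Ã₂, B₂, each with Hilbert space ℂ^d, in the global state ψ⁺_{A'₁A₁} ⊗ ψ⁺_{A'₂A₂} ⊗ ψ⁺_{Ã₁B₁} ⊗ ψ⁺_{Ã₂B₂}. There exist a POVM {M_i}_{i=1}^{d²} on A₁ ⊗ A₂ ⊗ Ã₁ ⊗ Ã₂ and, for each i and each x ∈ {1,2}, unitaries U_i^{(x)} on B₁ ⊗ B₂ such that the two entanglement fidelities F_x = Σ_{i=1}^{d²} tr[(ψ⁺_{A'ₓBₓ} ⊗ I_rest)(I ⊗ U_i^{(x)})(M_i ⊗ I)(ψ⁺_{A'₁A₁} ⊗ ψ⁺_{A'₂A₂} ⊗ ψ⁺_{Ã₁B₁} ⊗ ψ⁺_{Ã₂B₂})(I ⊗ U_i^{(x)†})] satisfy F₁ = 1 and F₂ = 1/d²; in particular the average success probability (F₁ + F₂)/2 equals (1/2)(1 + 1/d²). Hence the NS-QRAC with two shared d-dimensional maximally entangled states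 and 2 log d bits of classical communication admits a quantum strategy with success probability (1/2)(1 + 1/d²). -/
open Matrix BigOperators ComplexOrder

noncomputable section

/-- The maximally entangled state `|ψ⁺⟩ = (1/√d) Σᵢ |i⟩ ⊗ |i⟩` on `ℂ^d ⊗ ℂ^d`. -/
def mes (d : ℕ) : Fin d × Fin d → ℂ :=
  fun p => if p.1 = p.2 then ((1 / Real.sqrt d : ℝ) : ℂ) else 0

/-- The rank-one projector `ψ⁺ = |ψ⁺⟩⟨ψ⁺|` onto the maximally entangled state. -/
def mesProj (d : ℕ) : Matrix (Fin d × Fin d) (Fin d × Fin d) ℂ :=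
  Matrix.of fun p q => mes d p * (starRingEnd ℂ) (mes d q)

/-- Index type for the eight systems: the first component records, for each `x : Fin 2`,
the pair `(A'ₓ, Aₓ)`; the second records, for each `x : Fin 2`, the pair `(Ãₓ, Bₓ)`. -/
abbrev E8 (d : ℕ) := (Fin 2 → Fin d × Fin d) × (Fin 2 → Fin d × Fin d)

/-- The global state `ψ⁺_{A'₁A₁} ⊗ ψ⁺_{A'₂A₂} ⊗ ψ⁺_{Ã₁B₁} ⊗ ψ⁺_{Ã₂B₂}`. -/
def globalState (d : ℕ) : Matrix (E8 d) (E8 d) ℂ :=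
  Matrix.of fun v w =>
    (∏ x : Fin 2, mesProj d (v.1 x) (w.1 x)) * ∏ x : Fin 2, mesProj d (v.2 x) (w.2 x)

/-- A POVM element `M` on `A₁ ⊗ A₂ ⊗ Ã₁ ⊗ Ã₂` embedded as `M ⊗ I` on the global space. -/
def bigM (d : ℕ)
    (M : Matrix ((Fin 2 → Fin d) × (Fin 2 → Fin d)) ((Fin 2 → Fin d) × (Fin 2 → Fin d)) ℂ) :
    Matrix (E8 d) (E8 d) ℂ :=
  Matrix.of fun v w =>
    M (fun x => (v.1 x).2, fun x => (v.2 x).1) (fun x => (w.1 x).2, fun x => (w.2 x).1) *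
      (if (∀ x, (v.1 x).1 = (w.1 x).1) ∧ (∀ x, (v.2 x).2 = (w.2 x).2) then 1 else 0)

/-- An operator `V` on `B₁ ⊗ B₂` embedded as `I ⊗ V` on the global space. -/
def bigU (d : ℕ) (V : Matrix (Fin 2 → Fin d) (Fin 2 → Fin d) ℂ) :
    Matrix (E8 d) (E8 d) ℂ :=
  Matrix.of fun v w =>
    (if (∀ x, v.1 x = w.1 x) ∧ (∀ x, (v.2 x).1 = (w.2 x).1) then 1 else 0) *
      V (fun x => (v.2 x).2) (fun x => (w.2 x).2)

/-- The projector `ψ⁺_{A'ₓBₓ} ⊗ I_rest` on the global space. -/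
def bigPsi (d : ℕ) (x : Fin 2) : Matrix (E8 d) (E8 d) ℂ :=
  Matrix.of fun v w =>
    mesProj d ((v.1 x).1, (v.2 x).2) ((w.1 x).1, (w.2 x).2) *
      (if (∀ y, (v.1 y).2 = (w.1 y).2) ∧ (∀ y, (v.2 y).1 = (w.2 y).1) ∧
          (∀ y, y ≠ x → (v.1 y).1 = (w.1 y).1) ∧ (∀ y, y ≠ x → (v.2 y).2 = (w.2 y).2)
        then 1 else 0)

/-- The entanglement fidelity `F_x` of the NS-QRAC strategy `(M, U)` for Bob's choice `x`. -/
def fid (d k : ℕ)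
    (M : Fin k → Matrix ((Fin 2 → Fin d) × (Fin 2 → Fin d)) ((Fin 2 → Fin d) × (Fin 2 → Fin d)) ℂ)
    (U : Fin k → Fin 2 → Matrix (Fin 2 → Fin d) (Fin 2 → Fin d) ℂ) (x : Fin 2) : ℝ :=
  (∑ i, Matrix.trace
      (bigPsi d x * bigU d (U i x) * bigM d (M i) * globalState d * bigU d (U i x)ᴴ)).re

/-!
Alice measures `A₀Ã₀` in the generalized Bell basis `|W_i⟩⟩/√d` of a unitary error basis `(W_i)`
(here the clock-and-shift matrices; completeness `∑ |W_i⟩⟩⟨⟨W_i| = d • 1` makes this a POVM).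
Asked for copy `0`, Bob applies `W_i` to `B₀`: this teleports `A₀` to `B₀` and leaves `A'₀B₀` in
`ψ⁺`, so the `i`-th term of `F₀` is the probability `tr(M_i ρ)` of outcome `i` and `F₀ = 1`.
Asked for copy `1`, Bob does nothing; the measurement drops out because `∑ M_i = 1`, and
`F₁ = tr(ψ⁺_{A'₁B₁} ρ) = 1/d²` because `A'₁` and `B₁` are maximally mixed and uncorrelated.

Each of `bigM`, `bigU`, `bigPsi` is a reindexed Kronecker product `K ⊗ₖ 1`, which reduces its
action on vectors to a sum over the systems `K` acts on.
-/

open scoped Kronecker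

namespace Matrix

variable {α ι S R : Type*} [Fintype S] [Fintype R] [DecidableEq R]

theorem kronecker_one_mulVec_apply [NonAssocSemiring α] (K : Matrix S S α) (f : S × R → α)
    (x : S × R) : (K ⊗ₖ (1 : Matrix R R α) *ᵥ f) x = ∑ s, K x.1 s * f (s, x.2) := by
  simp [mulVec, dotProduct, Fintype.sum_prod_type, one_apply]

theorem submatrix_kronecker_one_mulVec_apply [NonAssocSemiring α] [Fintype ι] (e : ι ≃ S × R)
    (K : Matrix S S α) (f : ι → α) (v : ι) :
    ((K ⊗ₖ (1 : Matrix R R α)).submatrix e e *ᵥ f) v =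
      ∑ s, K (e v).1 s * f (e.symm (s, (e v).2)) := by
  rw [submatrix_mulVec_equiv, Function.comp_apply, kronecker_one_mulVec_apply]
  rfl

theorem submatrix_mem_unitaryGroup {m n : Type*} [CommRing α] [StarRing α] [Fintype m]
    [DecidableEq m] [Fintype n] [DecidableEq n] {A : Matrix n n α} (hA : A ∈ unitaryGroup n α)
    (e : m ≃ n) : A.submatrix e e ∈ unitaryGroup m α := by
  rw [mem_unitaryGroup_iff, star_eq_conjTranspose, conjTranspose_submatrix, submatrix_mul_equiv,
    ← star_eq_conjTranspose, mem_unitaryGroup_iff.mp hA, submatrix_one_equiv]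

end Matrix

namespace NSQRAC

open Complex ComplexConjugate
open scoped Real

section Weyl

variable {d : ℕ} [NeZero d]

lemma exp_pow_mul_conj (n : ℕ) :
    exp (2 * π * I / d) ^ n * conj (exp (2 * π * I / d) ^ n) = 1 := by
  have h := (isPrimitiveRoot_exp d (NeZero.ne d)).norm'_eq_one (NeZero.ne d)
  rw [mul_conj, normSq_eq_norm_sq, norm_pow, h]
  simp

lemma sum_exp_pow_mul_conj (s s' : Fin d) :
    ∑ b : Fin d, exp (2 * π * I / d) ^ ((b : ℕ) * s) * conj (exp (2 * π * I / d) ^ ((b : ℕ) * s')) =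
      if s = s' then (d : ℂ) else 0 := by
  have hω := isPrimitiveRoot_exp d (NeZero.ne d)
  set ω := exp (2 * π * I / d)
  have hω0 : ω ≠ 0 := exp_ne_zero _
  have hconj : ∀ n : ℕ, conj (ω ^ n) = (ω ^ n)⁻¹ := fun n =>
    eq_inv_of_mul_eq_one_right (exp_pow_mul_conj n)
  set z := ω ^ (s : ℕ) * (ω ^ (s' : ℕ))⁻¹
  have hz : ∀ b : ℕ, ω ^ (b * s) * conj (ω ^ (b * s')) = z ^ b := fun b => by
    rw [hconj, mul_pow, inv_pow, ← pow_mul, ← pow_mul, mul_comm b, mul_comm b]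
  simp only [hz]
  rw [Fin.sum_univ_eq_sum_range (z ^ ·)]
  split_ifs with h
  · simp [z, h, hω0]
  · have hz1 : z ≠ 1 := fun h1 => h (Fin.ext (hω.pow_inj s.isLt s'.isLt
      (by rwa [mul_inv_eq_one₀ (pow_ne_zero _ hω0)] at h1)))
    have hpow : ∀ n : ℕ, (ω ^ n) ^ d = 1 := fun n => by
      rw [← pow_mul, mul_comm, pow_mul, hω.pow_eq_one, one_pow]
    have hzd : z ^ d = 1 := by rw [mul_pow, inv_pow, hpow, hpow, inv_one, one_mul]
    rw [geom_sum_eq hz1, hzd, sub_self, zero_div]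

def weyl (a b : Fin d) : Matrix (Fin d) (Fin d) ℂ :=
  of fun s t => if t = s + a then exp (2 * π * I / d) ^ ((b : ℕ) * s) else 0

lemma weyl_mem_unitaryGroup (a b : Fin d) : weyl a b ∈ unitaryGroup (Fin d) ℂ := by
  rw [mem_unitaryGroup_iff]
  ext s s'
  simp only [weyl, mul_apply, one_apply, star_apply, of_apply, RCLike.star_def, ite_mul, zero_mul,
    Finset.sum_ite_eq', Finset.mem_univ, if_true, add_left_inj]
  split_ifs with h
  · rw [h, exp_pow_mul_conj]
  · simp

lemma sum_vecMulVec_weyl :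
    ∑ p : Fin d × Fin d, vecMulVec (vec (weyl p.1 p.2)) (star (vec (weyl p.1 p.2))) =
      (d : ℂ) • 1 := by
  ext q q'
  simp only [Matrix.sum_apply, vecMulVec_apply, vec, weyl, of_apply, Pi.star_apply, RCLike.star_def,
    Matrix.smul_apply, one_apply, Fintype.sum_prod_type]
  rw [Fintype.sum_eq_single (q.1 - q.2)]
  · have hqq : q = q' ↔ q'.1 = q'.2 + (q.1 - q.2) ∧ q.2 = q'.2 := by
      rw [Prod.ext_iff]
      constructor
      · rintro ⟨h1, h2⟩
        rw [← h1, ← h2, add_sub_cancel]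
        exact ⟨rfl, rfl⟩
      · rintro ⟨h1, h2⟩
        rw [h1, ← h2, add_sub_cancel]
        exact ⟨rfl, rfl⟩
    by_cases hq : q'.1 = q'.2 + (q.1 - q.2)
    · simp only [add_sub_cancel, if_true, hq, sum_exp_pow_mul_conj, hqq, true_and]
      split_ifs <;> simp
    · simp [hq, hqq]
  · intro a ha
    refine Finset.sum_eq_zero fun b _ => ?_
    rw [if_neg fun h => ha (eq_sub_of_add_eq' h.symm), zero_mul]

end Weyl

lemma coe_inv_sqrt_mul_self (d : ℕ) : ((1 / √d : ℝ) : ℂ) * ((1 / √d : ℝ) : ℂ) = (d : ℂ)⁻¹ := by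
  rw [← sq, ← Complex.ofReal_pow, div_pow, Real.sq_sqrt (Nat.cast_nonneg d)]
  simp

variable {d : ℕ}

lemma sum_mes_mul_conj [NeZero d] : ∑ p, mes d p * conj (mes d p) = 1 := by
  simp only [mes, Fintype.sum_prod_type, apply_ite conj, map_zero, Complex.conj_ofReal, mul_ite,
    ite_mul, zero_mul, mul_zero, Finset.sum_ite_eq, Finset.mem_univ, if_true,
    coe_inv_sqrt_mul_self, Finset.sum_const, Finset.card_univ, Fintype.card_fin, nsmul_eq_mul]
  exact mul_inv_cancel₀ (NeZero.ne _)

lemma trace_mesProj [NeZero d] : trace (mesProj d) = 1 :=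
  sum_mes_mul_conj

lemma sum_mesProj_mul_ite_diag (s : Fin d × Fin d) :
    ∑ t, mesProj d s t * (if t.1 = t.2 then 1 else 0) = if s.1 = s.2 then 1 else 0 := by
  have : NeZero d := NeZero.of_pos (Fin.pos s.1)
  simp only [mesProj, of_apply, mes, Fintype.sum_prod_type, apply_ite conj, map_zero,
    Complex.conj_ofReal, mul_ite, ite_mul, zero_mul, mul_zero, mul_one, Finset.sum_ite_eq,
    Finset.mem_univ, if_true, Finset.sum_const, Finset.card_univ, Fintype.card_fin, nsmul_eq_mul]
  rw [coe_inv_sqrt_mul_self, mul_inv_cancel₀ (NeZero.ne _)]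

lemma prod_mes (p q : Fin 2 → Fin d) :
    ∏ x, mes d (p x, q x) = if p = q then (d : ℂ)⁻¹ else 0 := by
  simp only [mes, Fin.prod_univ_two, funext_iff, Fin.forall_fin_two]
  split_ifs <;> first | exact coe_inv_sqrt_mul_self d | simp_all

lemma mes_mul_mes (s α : Fin d × Fin d) :
    mes d (s.1, α.1) * mes d (α.2, s.2) = (d : ℂ)⁻¹ * if s = α then 1 else 0 := by
  simp only [mes, Prod.ext_iff]
  split_ifs <;> first | rw [coe_inv_sqrt_mul_self, mul_one] | simp_all

-- `v ↦ ((A, Ã), (A', B))`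
@[simps]
def splitAlice :
    E8 d ≃ ((Fin 2 → Fin d) × (Fin 2 → Fin d)) × ((Fin 2 → Fin d) × (Fin 2 → Fin d)) where
  toFun v := ((fun x => (v.1 x).2, fun x => (v.2 x).1), (fun x => (v.1 x).1, fun x => (v.2 x).2))
  invFun s := (fun x => (s.2.1 x, s.1.1 x), fun x => (s.1.2 x, s.2.2 x))
  left_inv _ := rfl
  right_inv _ := rfl

-- `v ↦ (B, ((A', A), Ã))`
@[simps]
def splitBob : E8 d ≃ (Fin 2 → Fin d) × ((Fin 2 → Fin d × Fin d) × (Fin 2 → Fin d)) where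
  toFun v := (fun x => (v.2 x).2, (v.1, fun x => (v.2 x).1))
  invFun s := (s.2.1, fun x => (s.2.2 x, s.1 x))
  left_inv _ := rfl
  right_inv _ := rfl

-- `v ↦ ((A'ₓ, Bₓ), ((Aₓ, Ãₓ), (A'ᵧ, Aᵧ), (Ãᵧ, Bᵧ)))` with `y = x + 1` the other copy
@[simps]
def splitTarget (x : Fin 2) :
    E8 d ≃ (Fin d × Fin d) × ((Fin d × Fin d) × (Fin d × Fin d) × (Fin d × Fin d)) where
  toFun v := (((v.1 x).1, (v.2 x).2), (((v.1 x).2, (v.2 x).1), v.1 (x + 1), v.2 (x + 1)))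
  invFun s := (fun y => if y = x then (s.1.1, s.2.1.1) else s.2.2.1,
    fun y => if y = x then (s.2.1.2, s.1.2) else s.2.2.2)
  left_inv v := by ext y <;> fin_cases x <;> fin_cases y <;> simp
  right_inv s := by fin_cases x <;> simp

lemma bigM_eq
    (K : Matrix ((Fin 2 → Fin d) × (Fin 2 → Fin d)) ((Fin 2 → Fin d) × (Fin 2 → Fin d)) ℂ) :
    bigM d K = (K ⊗ₖ 1).submatrix splitAlice splitAlice := by
  ext v w
  simp [bigM, one_apply, Prod.ext_iff, funext_iff]

lemma bigU_eq (V : Matrix (Fin 2 → Fin d) (Fin 2 → Fin d) ℂ) :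
    bigU d V = (V ⊗ₖ 1).submatrix splitBob splitBob := by
  ext v w
  simp [bigU, one_apply, Prod.ext_iff, funext_iff, mul_comm]

lemma bigPsi_eq (x : Fin 2) :
    bigPsi d x = (mesProj d ⊗ₖ 1).submatrix (splitTarget x) (splitTarget x) := by
  ext v w
  fin_cases x <;>
    simp only [bigPsi, splitTarget, Fin.zero_eta, Fin.mk_one, Fin.isValue, Fin.forall_fin_two,
      ne_eq, not_true_eq_false, IsEmpty.forall_iff, one_ne_zero, zero_ne_one, not_false_eq_true,
      forall_const, true_and, and_true, mul_ite, mul_one, mul_zero, of_apply, zero_add,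
      Fin.reduceAdd, Equiv.coe_fn_mk, submatrix_apply, kroneckerMap_apply, one_apply,
      Prod.ext_iff] <;>
    exact if_congr (by tauto) rfl rfl

lemma bigM_one : bigM d 1 = 1 := by
  rw [bigM_eq, one_kronecker_one, submatrix_one_equiv]

lemma sum_bigM {ι : Type*} [Fintype ι]
    (M : ι → Matrix ((Fin 2 → Fin d) × (Fin 2 → Fin d)) ((Fin 2 → Fin d) × (Fin 2 → Fin d)) ℂ) :
    ∑ i, bigM d (M i) = bigM d (∑ i, M i) := by
  ext v w
  simp [bigM, Matrix.sum_apply]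

lemma bigU_one : bigU d 1 = 1 := by
  rw [bigU_eq, one_kronecker_one, submatrix_one_equiv]

lemma bigU_mul (V V' : Matrix (Fin 2 → Fin d) (Fin 2 → Fin d) ℂ) :
    bigU d V * bigU d V' = bigU d (V * V') := by
  rw [bigU_eq, bigU_eq, bigU_eq, submatrix_mul_equiv, ← mul_kronecker_mul, one_mul]

lemma trace_bigU_mul_mul_bigU_conjTranspose {V : Matrix (Fin 2 → Fin d) (Fin 2 → Fin d) ℂ}
    (hV : V ∈ unitaryGroup (Fin 2 → Fin d) ℂ) (X : Matrix (E8 d) (E8 d) ℂ) :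
    trace (bigU d V * X * bigU d Vᴴ) = trace X := by
  rw [trace_mul_cycle, bigU_mul, ← star_eq_conjTranspose, mem_unitaryGroup_iff'.mp hV, bigU_one,
    one_mul]

lemma bigU_mulVec_apply (V : Matrix (Fin 2 → Fin d) (Fin 2 → Fin d) ℂ) (f : E8 d → ℂ) (v : E8 d) :
    (bigU d V *ᵥ f) v = ∑ t, V (fun x => (v.2 x).2) t * f (v.1, fun x => ((v.2 x).1, t x)) := by
  rw [bigU_eq, submatrix_kronecker_one_mulVec_apply]
  rfl

lemma bigPsi_mulVec_eq_self (x : Fin 2) (f : E8 d → ℂ)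
    (h : (Fin d × Fin d) × (Fin d × Fin d) × (Fin d × Fin d) → ℂ)
    (hf : ∀ s r, f ((splitTarget x).symm (s, r)) = (if s.1 = s.2 then 1 else 0) * h r) :
    bigPsi d x *ᵥ f = f := by
  ext v
  obtain ⟨⟨s, r⟩, rfl⟩ := (splitTarget x).symm.surjective v
  rw [bigPsi_eq, submatrix_kronecker_one_mulVec_apply, Equiv.apply_symm_apply]
  simp only [hf, ← mul_assoc, ← Finset.sum_mul, sum_mesProj_mul_ite_diag]

def globalVec (d : ℕ) : E8 d → ℂ := fun v => (∏ x, mes d (v.1 x)) * ∏ x, mes d (v.2 x)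

lemma globalState_eq : globalState d = vecMulVec (globalVec d) (star (globalVec d)) := by
  ext v w
  simp only [globalState, mesProj, globalVec, vecMulVec, of_apply, Fin.prod_univ_two, Pi.star_apply,
    star_mul', RCLike.star_def]
  ring

lemma trace_globalState [NeZero d] : trace (globalState d) = 1 := by
  simp only [trace, diag, globalState, of_apply, Fintype.sum_prod_type, ← Finset.sum_mul_sum]
  rw [← Fintype.sum_pow (fun p => mesProj d p p)]
  have h : ∑ p, mesProj d p p = 1 := trace_mesProj
  rw [h, one_pow, one_mul]

lemma globalVec_splitTarget_symm (x : Fin 2) (s : Fin d × Fin d)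
    (r : (Fin d × Fin d) × (Fin d × Fin d) × (Fin d × Fin d)) :
    globalVec d ((splitTarget x).symm (s, r)) =
      (d : ℂ)⁻¹ * (if s = r.1 then 1 else 0) * (mes d r.2.1 * mes d r.2.2) := by
  rw [← mes_mul_mes]
  fin_cases x <;>
    simp only [globalVec, Fin.zero_eta, Fin.mk_one, Fin.isValue, splitTarget_symm_apply,
      Fin.prod_univ_two, ↓reduceIte, one_ne_zero, zero_ne_one] <;>
    ring

lemma trace_bigPsi_mul_globalState [NeZero d] (x : Fin 2) :
    trace (bigPsi d x * globalState d) = (d : ℂ)⁻¹ ^ 2 := by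
  rw [globalState_eq, mul_vecMulVec, trace_vecMulVec, dotProduct, ← (splitTarget x).symm.sum_comp,
    Fintype.sum_prod_type, Finset.sum_comm]
  simp only [bigPsi_eq, submatrix_kronecker_one_mulVec_apply, Equiv.apply_symm_apply,
    Pi.star_apply, globalVec_splitTarget_symm, mul_ite, ite_mul, mul_one, mul_zero, zero_mul,
    Finset.sum_ite_eq', Finset.mem_univ, if_true, apply_ite (star : ℂ → ℂ), star_zero]
  calc ∑ r : (Fin d × Fin d) × (Fin d × Fin d) × (Fin d × Fin d),
        mesProj d r.1 r.1 * ((d : ℂ)⁻¹ * (mes d r.2.1 * mes d r.2.2)) *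
          star ((d : ℂ)⁻¹ * (mes d r.2.1 * mes d r.2.2))
      = ∑ α, ∑ β, ∑ γ, (d : ℂ)⁻¹ ^ 2 * (mes d α * conj (mes d α)) *
          ((mes d β * conj (mes d β)) * (mes d γ * conj (mes d γ))) := by
        rw [Fintype.sum_prod_type]
        refine Finset.sum_congr rfl fun α _ => ?_
        rw [Fintype.sum_prod_type]
        refine Finset.sum_congr rfl fun β _ => Finset.sum_congr rfl fun γ _ => ?_
        simp only [mesProj, of_apply, star_mul', RCLike.star_def, map_inv₀, map_natCast]
        ring
    _ = (d : ℂ)⁻¹ ^ 2 := by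
        simp only [← Finset.mul_sum, sum_mes_mul_conj, mul_one]

lemma bigM_mulVec_globalVec
    (K : Matrix ((Fin 2 → Fin d) × (Fin 2 → Fin d)) ((Fin 2 → Fin d) × (Fin 2 → Fin d)) ℂ) :
    bigM d K *ᵥ globalVec d = fun v => (d : ℂ)⁻¹ ^ 2 *
      K (fun x => (v.1 x).2, fun x => (v.2 x).1) (fun x => (v.1 x).1, fun x => (v.2 x).2) := by
  ext v
  rw [bigM_eq, submatrix_kronecker_one_mulVec_apply]
  simp only [splitAlice_apply, splitAlice_symm_apply, globalVec, prod_mes, Fintype.sum_prod_type,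
    mul_ite, ite_mul, mul_zero, zero_mul, Finset.sum_ite_eq, Finset.sum_ite_eq', Finset.mem_univ,
    if_true]
  ring

-- `(a, ã) ↦ ((ã₀, a₀), (ã₁, a₁))`: `Matrix.vec` is column-major, so `vec W (ã₀, a₀) = W a₀ ã₀`.
@[simps]
def splitCopies : (Fin 2 → Fin d) × (Fin 2 → Fin d) ≃ (Fin d × Fin d) × (Fin d × Fin d) where
  toFun s := ((s.2 0, s.1 0), (s.2 1, s.1 1))
  invFun p := (![p.1.2, p.2.2], ![p.1.1, p.2.1])
  left_inv s := by ext x <;> fin_cases x <;> rfl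
  right_inv _ := rfl

def teleportPOVM (W : Matrix (Fin d) (Fin d) ℂ) :
    Matrix ((Fin 2 → Fin d) × (Fin 2 → Fin d)) ((Fin 2 → Fin d) × (Fin 2 → Fin d)) ℂ :=
  (((d : ℂ)⁻¹ • vecMulVec (vec W) (star (vec W))) ⊗ₖ 1).submatrix splitCopies splitCopies

def teleportCorrection (W : Matrix (Fin d) (Fin d) ℂ) : Matrix (Fin 2 → Fin d) (Fin 2 → Fin d) ℂ :=
  (W ⊗ₖ 1).submatrix (finTwoArrowEquiv (Fin d)) (finTwoArrowEquiv (Fin d))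

lemma teleportPOVM_posSemidef (W : Matrix (Fin d) (Fin d) ℂ) : (teleportPOVM W).PosSemidef :=
  (((posSemidef_vecMulVec_self_star _).smul (by positivity)).kronecker PosSemidef.one).submatrix _

lemma sum_teleportPOVM [NeZero d] {ι : Type*} [Fintype ι] (W : ι → Matrix (Fin d) (Fin d) ℂ)
    (hW : ∑ i, vecMulVec (vec (W i)) (star (vec (W i))) = (d : ℂ) • 1) :
    ∑ i, teleportPOVM (W i) = 1 := by
  have h : ∑ i, teleportPOVM (W i) = (((d : ℂ)⁻¹ • ∑ i, vecMulVec (vec (W i)) (star (vec (W i))))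
      ⊗ₖ 1).submatrix splitCopies splitCopies := by
    ext s s'
    simp [teleportPOVM, Matrix.sum_apply, Finset.sum_mul, Finset.mul_sum]
  rw [h, hW, smul_smul, inv_mul_cancel₀ (NeZero.ne _), one_smul, one_kronecker_one,
    submatrix_one_equiv]

lemma teleportCorrection_mem_unitaryGroup {W : Matrix (Fin d) (Fin d) ℂ}
    (hW : W ∈ unitaryGroup (Fin d) ℂ) : teleportCorrection W ∈ unitaryGroup (Fin 2 → Fin d) ℂ :=
  submatrix_mem_unitaryGroup (kronecker_mem_unitary hW (one_mem _)) _

lemma teleport_mulVec_globalVec {W : Matrix (Fin d) (Fin d) ℂ} (hW : W ∈ unitaryGroup (Fin d) ℂ) :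
    (bigU d (teleportCorrection W) * bigM d (teleportPOVM W)) *ᵥ globalVec d = fun v =>
      (d : ℂ)⁻¹ ^ 3 * W (v.1 0).2 (v.2 0).1 *
        ((if (v.1 0).1 = (v.2 0).2 then 1 else 0) * (if (v.1 1).1 = (v.1 1).2 then 1 else 0) *
          (if (v.2 1).1 = (v.2 1).2 then 1 else 0)) := by
  have hWW : ∀ i j, ∑ t, W i t * star (W j t) = if i = j then 1 else 0 := fun i j => by
    rw [← one_apply, ← mem_unitaryGroup_iff.mp hW]
    rfl
  ext v
  rw [← mulVec_mulVec, bigM_mulVec_globalVec, bigU_mulVec_apply,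
    ← (finTwoArrowEquiv (Fin d)).symm.sum_comp, Fintype.sum_prod_type]
  simp only [teleportPOVM, teleportCorrection, finTwoArrowEquiv_apply, Equiv.toFun_as_coe,
    piFinTwoEquiv_apply, finTwoArrowEquiv_symm_apply, submatrix_apply, cons_val_zero, cons_val_one,
    cons_val_fin_one, kroneckerMap_apply, one_apply, mul_ite, mul_one, mul_zero, inv_pow,
    splitCopies_apply, Matrix.smul_apply, vecMulVec_apply, vec, Pi.star_apply, RCLike.star_def,
    smul_eq_mul, Prod.mk.injEq, ite_mul, zero_mul, ite_and, Finset.sum_ite_irrel,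
    Finset.sum_ite_eq, Finset.mem_univ, if_true, Finset.sum_const_zero]
  rw [Finset.sum_congr rfl fun t _ => show W (v.2 0).2 t * _ = (d : ℂ)⁻¹ ^ 3 *
      W (v.1 0).2 (v.2 0).1 * (W (v.2 0).2 t * star (W (v.1 0).1 t)) by
    simp only [Complex.star_def]; ring, ← Finset.mul_sum, hWW]
  split_ifs <;> simp_all [eq_comm]

lemma bigPsi_zero_mul_teleport_mul_globalState {W : Matrix (Fin d) (Fin d) ℂ}
    (hW : W ∈ unitaryGroup (Fin d) ℂ) :
    bigPsi d 0 * bigU d (teleportCorrection W) * bigM d (teleportPOVM W) * globalState d =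
      bigU d (teleportCorrection W) * bigM d (teleportPOVM W) * globalState d := by
  rw [globalState_eq, mul_vecMulVec, mul_vecMulVec, Matrix.mul_assoc, ← mulVec_mulVec,
    bigPsi_mulVec_eq_self 0 _ (fun r => (d : ℂ)⁻¹ ^ 3 * W r.1.1 r.1.2 *
      ((if r.2.1.1 = r.2.1.2 then 1 else 0) * (if r.2.2.1 = r.2.2.2 then 1 else 0)))]
  intro s r
  rw [teleport_mulVec_globalVec hW]
  simp

theorem fid_zero_teleport_eq_one [NeZero d] {k : ℕ} (W : Fin k → Matrix (Fin d) (Fin d) ℂ)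
    (hW : ∀ i, W i ∈ unitaryGroup (Fin d) ℂ) (hM : ∑ i, teleportPOVM (W i) = 1) :
    fid d k (fun i => teleportPOVM (W i)) (fun i => ![teleportCorrection (W i), 1]) 0 = 1 := by
  have hterm : ∀ i, trace (bigPsi d 0 * bigU d (teleportCorrection (W i)) *
      bigM d (teleportPOVM (W i)) * globalState d * bigU d (teleportCorrection (W i))ᴴ) =
      trace (bigM d (teleportPOVM (W i)) * globalState d) := fun i => by
    rw [bigPsi_zero_mul_teleport_mul_globalState (hW i), Matrix.mul_assoc (bigU d _),
      trace_bigU_mul_mul_bigU_conjTranspose (teleportCorrection_mem_unitaryGroup (hW i))]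
  simp only [fid, Matrix.cons_val_zero, hterm, ← trace_sum, ← Finset.sum_mul, sum_bigM, hM,
    bigM_one, Matrix.one_mul, trace_globalState, Complex.one_re]

theorem fid_one_eq_of_sum_eq_one [NeZero d] {k : ℕ}
    (M : Fin k → Matrix ((Fin 2 → Fin d) × (Fin 2 → Fin d)) ((Fin 2 → Fin d) × (Fin 2 → Fin d)) ℂ)
    (U : Fin k → Fin 2 → Matrix (Fin 2 → Fin d) (Fin 2 → Fin d) ℂ)
    (hM : ∑ i, M i = 1) (hU : ∀ i, U i 1 = 1) : fid d k M U 1 = 1 / (d : ℝ) ^ 2 := by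
  simp only [fid, hU, bigU_one, conjTranspose_one, Matrix.mul_one, ← trace_sum, ← Finset.sum_mul,
    ← Finset.mul_sum, sum_bigM, hM, bigM_one, trace_bigPsi_mul_globalState]
  rw [← Complex.ofReal_natCast, ← Complex.ofReal_inv, ← Complex.ofReal_pow, Complex.ofReal_re,
    inv_pow, one_div]

end NSQRAC

open NSQRAC in
/-- NS-QRAC with two shared maximally entangled states and `2 log d` bits (i.e. `d²`
classical messages): there is a quantum strategy with `F₁ = 1` and `F₂ = 1/d²`, hence
average success probability `(1/2)(1 + 1/d²)`. -/
theorem nsqrac_lower_bound (d : ℕ) (hd : 2 ≤ d) :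
    ∃ (M : Fin (d ^ 2) →
        Matrix ((Fin 2 → Fin d) × (Fin 2 → Fin d)) ((Fin 2 → Fin d) × (Fin 2 → Fin d)) ℂ)
      (U : Fin (d ^ 2) → Fin 2 → Matrix (Fin 2 → Fin d) (Fin 2 → Fin d) ℂ),
      (∀ i, (M i).PosSemidef) ∧ (∑ i, M i = 1) ∧
      (∀ i x, U i x ∈ Matrix.unitaryGroup (Fin 2 → Fin d) ℂ) ∧
      fid d (d ^ 2) M U 0 = 1 ∧ fid d (d ^ 2) M U 1 = 1 / (d : ℝ) ^ 2 ∧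
      (fid d (d ^ 2) M U 0 + fid d (d ^ 2) M U 1) / 2 = (1 / 2) * (1 + 1 / (d : ℝ) ^ 2) := by
  have : NeZero d := ⟨by omega⟩
  let e : Fin (d ^ 2) ≃ Fin d × Fin d := (finCongr (sq d)).trans finProdFinEquiv.symm
  let W : Fin (d ^ 2) → Matrix (Fin d) (Fin d) ℂ := fun i => weyl (e i).1 (e i).2
  have hW : ∀ i, W i ∈ unitaryGroup (Fin d) ℂ := fun i => weyl_mem_unitaryGroup _ _
  have hM : ∑ i, teleportPOVM (W i) = 1 := sum_teleportPOVM W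
    ((e.sum_comp fun p => vecMulVec (vec (weyl p.1 p.2)) (star (vec (weyl p.1 p.2)))).trans
      sum_vecMulVec_weyl)
  have h₀ := fid_zero_teleport_eq_one W hW hM
  have h₁ := fid_one_eq_of_sum_eq_one _ (fun i => ![teleportCorrection (W i), 1]) hM fun i => rfl
  refine ⟨_, _, fun i => teleportPOVM_posSemidef (W i), hM, fun i x => ?_, h₀, h₁,
    by rw [h₀, h₁]; ring⟩
  fin_cases x
  exacts [teleportCorrection_mem_unitaryGroup (hW i), one_mem _]
end
end

section
/- Fix an integer d ≥ 2. For every density matrix ρ on ℂ^d ⊗ ℂ^d ⊗ ℂ^d with tensor factors labelled A, B, C, the singlet fractions of the two reduced states satisfy the strict monogamy inequality F(tr_C ρ) + F(tr_B ρ) < 2; equivalently, it is impossible that both the reduced state on A ⊗ B and the reduced state on A ⊗ C are maximally entangled. -/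
open Matrix BigOperators ComplexOrder

noncomputable section

/-- Index type for the three systems A, B, C, each of dimension `d`. -/
abbrev I3 (d : ℕ) := Fin d × Fin d × Fin d

/-- Partial trace over the third factor C. -/
def trC (d : ℕ) (ρ : Matrix (I3 d) (I3 d) ℂ) :
    Matrix (Fin d × Fin d) (Fin d × Fin d) ℂ :=
  Matrix.of fun p q => ∑ c : Fin d, ρ (p.1, p.2, c) (q.1, q.2, c)

/-- Partial trace over the second factor B. -/
def trB (d : ℕ) (ρ : Matrix (I3 d) (I3 d) ℂ) :
    Matrix (Fin d × Fin d) (Fin d × Fin d) ℂ :=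
  Matrix.of fun p q => ∑ b : Fin d, ρ (p.1, b, p.2) (q.1, b, q.2)

/-- Partial trace over the first two factors A, B. -/
def trAB (d : ℕ) (ρ : Matrix (I3 d) (I3 d) ℂ) : Matrix (Fin d) (Fin d) ℂ :=
  Matrix.of fun c c' => ∑ a : Fin d, ∑ b : Fin d, ρ (a, b, c) (a, b, c')

/-- The singlet fraction `F(σ) = ⟨ψ⁺|σ|ψ⁺⟩` of a bipartite state. -/
def singletFraction (d : ℕ) (σ : Matrix (Fin d × Fin d) (Fin d × Fin d) ℂ) : ℂ :=
  star (mes d) ⬝ᵥ σ.mulVec (mes d)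

/-!
The two singlet fractions add up to `∑_c (⟨u_c|ρ|u_c⟩ + ⟨v_c|ρ|v_c⟩)`, where
`u_c = ψ⁺_AB ⊗ |c⟩_C = mesAB d c` and `v_c = ψ⁺_AC ⊗ |c⟩_B = mesAC d c`. Each family is
orthonormal and `⟨u_c, v_c'⟩ = δ_cc' / d`, so the normalised vectors `u_c ± v_c` form one
orthonormal family. Bessel's inequality for it, together with the parallelogram law, bounds the
quadratic form `∑_c (|⟨u_c, x⟩|² + |⟨v_c, x⟩|²)` by `(1 + 1/d) ‖x‖²`. A density matrix is a
convex combination of rank-one projectors, so the sum of the singlet fractions is at most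
`1 + 1/d < 2`.
-/

open scoped InnerProductSpace

section
variable {𝕜 E ι : Type*} [RCLike 𝕜] [NormedAddCommGroup E] [InnerProductSpace 𝕜 E]
  [DecidableEq ι] {u v : ι → E} {t : ℝ}

theorem Orthonormal.orthonormal_smul_add_sub (hu : Orthonormal 𝕜 u) (hv : Orthonormal 𝕜 v)
    (huv : ∀ i j, ⟪u i, v j⟫_𝕜 = if i = j then (t : 𝕜) else 0) (ht₀ : -1 < t) (ht₁ : t < 1) :
    Orthonormal 𝕜 fun p : ι × Bool =>
      if p.2 then ((√(2 * (1 + t)))⁻¹ : 𝕜) • (u p.1 + v p.1)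
      else ((√(2 * (1 - t)))⁻¹ : 𝕜) • (u p.1 - v p.1) := by
  have hvu : ∀ i j, ⟪v i, u j⟫_𝕜 = if i = j then (t : 𝕜) else 0 := fun i j => by
    rw [← inner_conj_symm, huv]; split_ifs <;> simp_all [eq_comm]
  rw [orthonormal_iff_ite] at hu hv ⊢
  have hadd : ∀ i j,
      ⟪u i + v i, u j + v j⟫_𝕜 = if i = j then ((2 * (1 + t) : ℝ) : 𝕜) else 0 := by
    intro i j
    simp only [inner_add_left, inner_add_right, hu, hv, huv, hvu]
    split_ifs <;> push_cast <;> ring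
  have hsub : ∀ i j,
      ⟪u i - v i, u j - v j⟫_𝕜 = if i = j then ((2 * (1 - t) : ℝ) : 𝕜) else 0 := by
    intro i j
    simp only [inner_sub_left, inner_sub_right, hu, hv, huv, hvu]
    split_ifs <;> push_cast <;> ring
  have haddsub : ∀ i j, ⟪u i + v i, u j - v j⟫_𝕜 = 0 := by
    intro i j; simp only [inner_add_left, inner_sub_right, hu, hv, huv, hvu]; ring
  have hsubadd : ∀ i j, ⟪u i - v i, u j + v j⟫_𝕜 = 0 := by
    intro i j; simp only [inner_sub_left, inner_add_right, hu, hv, huv, hvu]; ring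
  have hnorm : ∀ a : ℝ, 0 < a →
      ((√a : 𝕜))⁻¹ * ((starRingEnd 𝕜) ((√a : 𝕜))⁻¹ * (a : 𝕜)) = 1 := by
    intro a ha
    rw [map_inv₀, RCLike.conj_ofReal, ← mul_assoc, ← mul_inv, ← RCLike.ofReal_mul,
      Real.mul_self_sqrt ha.le, inv_mul_cancel₀ (RCLike.ofReal_ne_zero.mpr ha.ne')]
  have hplus := hnorm _ (by linarith : (0:ℝ) < 2 * (1 + t))
  have hminus := hnorm _ (by linarith : (0:ℝ) < 2 * (1 - t))
  rintro ⟨i, _ | _⟩ ⟨j, _ | _⟩ <;> by_cases hij : i = j <;>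
    simp only [Bool.false_eq_true, Bool.true_eq_false, ↓reduceIte, Prod.mk.injEq, and_true,
      and_false, and_self, inner_smul_left, inner_smul_right, hadd, hsub, haddsub, hsubadd, hij,
      mul_zero, hplus, hminus]

theorem norm_inner_inv_sqrt_smul_left_sq {a : ℝ} (ha : 0 ≤ a) (y x : E) :
    ‖⟪((√a : 𝕜))⁻¹ • y, x⟫_𝕜‖ ^ 2 = ‖⟪y, x⟫_𝕜‖ ^ 2 / a := by
  rw [inner_smul_left, norm_mul, RCLike.norm_conj, norm_inv, RCLike.norm_ofReal,
    abs_of_nonneg (Real.sqrt_nonneg a), mul_pow, inv_pow, Real.sq_sqrt ha, inv_mul_eq_div]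

theorem Orthonormal.sum_norm_inner_sq_add_le [Fintype ι] (hu : Orthonormal 𝕜 u)
    (hv : Orthonormal 𝕜 v) (huv : ∀ i j, ⟪u i, v j⟫_𝕜 = if i = j then (t : 𝕜) else 0)
    (ht₀ : 0 ≤ t) (ht₁ : t < 1) (x : E) :
    ∑ i, (‖⟪u i, x⟫_𝕜‖ ^ 2 + ‖⟪v i, x⟫_𝕜‖ ^ 2) ≤ (1 + t) * ‖x‖ ^ 2 := by
  have bessel := (hu.orthonormal_smul_add_sub hv huv (by linarith) ht₁).sum_inner_products_le
    (s := Finset.univ) x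
  simp only [Fintype.sum_prod_type, Fintype.sum_bool, ↓reduceIte, Bool.false_eq_true,
    norm_inner_inv_sqrt_smul_left_sq (by linarith : (0:ℝ) ≤ 2 * (1 + t)),
    norm_inner_inv_sqrt_smul_left_sq (by linarith : (0:ℝ) ≤ 2 * (1 - t)),
    inner_add_left, inner_sub_left] at bessel
  refine le_trans (Finset.sum_le_sum fun i _ => ?_) (by rw [← Finset.mul_sum]; gcongr)
  set p := ⟪u i, x⟫_𝕜
  set q := ⟪v i, x⟫_𝕜
  have parallelogram := parallelogram_law_with_norm 𝕜 p q
  have ht : 0 < 1 + t := by linarith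
  calc ‖p‖ ^ 2 + ‖q‖ ^ 2
      = (1 + t) * (‖p + q‖ ^ 2 / (2 * (1 + t)) + ‖p - q‖ ^ 2 / (2 * (1 + t))) := by
        field_simp; linarith
    _ ≤ (1 + t) * (‖p + q‖ ^ 2 / (2 * (1 + t)) + ‖p - q‖ ^ 2 / (2 * (1 - t))) := by
        gcongr; linarith
end

section
variable {𝕜 n ι : Type*} [RCLike 𝕜] [Fintype n] [Fintype ι]

theorem Matrix.re_dotProduct_vecMulVec_mulVec (y w : n → 𝕜) :
    RCLike.re (star w ⬝ᵥ vecMulVec y (star y) *ᵥ w) =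
      ‖⟪WithLp.toLp 2 w, WithLp.toLp 2 y⟫_𝕜‖ ^ 2 := by
  rw [vecMulVec_mulVec, EuclideanSpace.inner_toLp_toLp, op_smul_eq_smul, dotProduct_smul,
    smul_eq_mul, star_dotProduct, dotProduct_comm y, RCLike.star_def, RCLike.conj_mul]
  norm_cast

theorem Matrix.PosSemidef.sum_re_dotProduct_mulVec_le {ρ : Matrix n n 𝕜} (hρ : ρ.PosSemidef)
    (w : ι → EuclideanSpace 𝕜 n) {c : ℝ}
    (hc : ∀ x : EuclideanSpace 𝕜 n, ∑ i, ‖⟪w i, x⟫_𝕜‖ ^ 2 ≤ c * ‖x‖ ^ 2) :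
    ∑ i, RCLike.re (star (w i).ofLp ⬝ᵥ ρ *ᵥ (w i).ofLp) ≤ c * RCLike.re ρ.trace := by
  obtain ⟨m, y, rfl⟩ := Matrix.posSemidef_iff_eq_sum_vecMulVec.mp hρ
  have htrace : RCLike.re (∑ k, vecMulVec (y k) (star (y k))).trace
      = ∑ k, ‖WithLp.toLp 2 (y k)‖ ^ 2 := by
    simp only [trace_sum, trace_vecMulVec, map_sum, ← EuclideanSpace.inner_toLp_toLp,
      inner_self_eq_norm_sq]
  simp only [sum_mulVec, dotProduct_sum, map_sum, re_dotProduct_vecMulVec_mulVec, htrace,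
    Finset.mul_sum]
  rw [Finset.sum_comm]
  exact Finset.sum_le_sum fun k _ => hc _
end

theorem conj_mes_apply (d : ℕ) (p : Fin d × Fin d) : (starRingEnd ℂ) (mes d p) = mes d p := by
  unfold mes; split_ifs <;> simp

theorem mes_mul_mes (d : ℕ) (a b b' : Fin d) :
    mes d (a, b) * mes d (a, b') = if a = b then if a = b' then (d : ℂ)⁻¹ else 0 else 0 := by
  unfold mes
  split_ifs <;> simp [← Complex.ofReal_mul, ← mul_inv, Real.mul_self_sqrt (Nat.cast_nonneg d)]

def mesAB (d : ℕ) (c : Fin d) : EuclideanSpace ℂ (I3 d) :=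
  WithLp.toLp 2 fun p => mes d (p.1, p.2.1) * if p.2.2 = c then 1 else 0

def mesAC (d : ℕ) (c : Fin d) : EuclideanSpace ℂ (I3 d) :=
  WithLp.toLp 2 fun p => mes d (p.1, p.2.2) * if p.2.1 = c then 1 else 0

theorem orthonormal_mesAB {d : ℕ} (hd : d ≠ 0) : Orthonormal ℂ (mesAB d) := by
  rw [orthonormal_iff_ite]
  intro c c'
  simp only [mesAB, EuclideanSpace.inner_toLp_toLp]
  rcases eq_or_ne c c' with rfl | h <;>
    simp [dotProduct, Fintype.sum_prod_type, conj_mes_apply, apply_ite, ite_mul, mes_mul_mes, *]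

theorem orthonormal_mesAC {d : ℕ} (hd : d ≠ 0) : Orthonormal ℂ (mesAC d) := by
  rw [orthonormal_iff_ite]
  intro c c'
  simp only [mesAC, EuclideanSpace.inner_toLp_toLp]
  rcases eq_or_ne c c' with rfl | h <;>
    simp [dotProduct, Fintype.sum_prod_type, conj_mes_apply, apply_ite, ite_mul, mes_mul_mes, *]

theorem inner_mesAB_mesAC (d : ℕ) (c c' : Fin d) :
    ⟪mesAB d c, mesAC d c'⟫_ℂ = if c = c' then (((d : ℝ)⁻¹ : ℝ) : ℂ) else 0 := by
  simp only [mesAB, mesAC, EuclideanSpace.inner_toLp_toLp]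
  rcases eq_or_ne c c' with rfl | h <;>
    simp [dotProduct, Fintype.sum_prod_type, conj_mes_apply, apply_ite, ite_mul, mes_mul_mes, *]

theorem dotProduct_mulVec_mesAB (d : ℕ) (ρ : Matrix (I3 d) (I3 d) ℂ) (c : Fin d) :
    star (mesAB d c).ofLp ⬝ᵥ ρ *ᵥ (mesAB d c).ofLp =
      star (mes d) ⬝ᵥ (Matrix.of fun p q => ρ (p.1, p.2, c) (q.1, q.2, c)) *ᵥ mes d := by
  simp [mesAB, dotProduct, mulVec, Fintype.sum_prod_type, apply_ite, ite_mul]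

theorem dotProduct_mulVec_mesAC (d : ℕ) (ρ : Matrix (I3 d) (I3 d) ℂ) (c : Fin d) :
    star (mesAC d c).ofLp ⬝ᵥ ρ *ᵥ (mesAC d c).ofLp =
      star (mes d) ⬝ᵥ (Matrix.of fun p q => ρ (p.1, c, p.2) (q.1, c, q.2)) *ᵥ mes d := by
  simp [mesAC, dotProduct, mulVec, Fintype.sum_prod_type, apply_ite, ite_mul]

theorem trC_eq_sum (d : ℕ) (ρ : Matrix (I3 d) (I3 d) ℂ) :
    trC d ρ = ∑ c, Matrix.of fun p q => ρ (p.1, p.2, c) (q.1, q.2, c) := by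
  ext; simp [trC, Matrix.sum_apply]

theorem trB_eq_sum (d : ℕ) (ρ : Matrix (I3 d) (I3 d) ℂ) :
    trB d ρ = ∑ b, Matrix.of fun p q => ρ (p.1, b, p.2) (q.1, b, q.2) := by
  ext; simp [trB, Matrix.sum_apply]

theorem singletFraction_trC (d : ℕ) (ρ : Matrix (I3 d) (I3 d) ℂ) :
    singletFraction d (trC d ρ) = ∑ c, star (mesAB d c).ofLp ⬝ᵥ ρ *ᵥ (mesAB d c).ofLp := by
  simp only [singletFraction, trC_eq_sum, sum_mulVec, dotProduct_sum, dotProduct_mulVec_mesAB]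

theorem singletFraction_trB (d : ℕ) (ρ : Matrix (I3 d) (I3 d) ℂ) :
    singletFraction d (trB d ρ) = ∑ b, star (mesAC d b).ofLp ⬝ᵥ ρ *ᵥ (mesAC d b).ofLp := by
  simp only [singletFraction, trB_eq_sum, sum_mulVec, dotProduct_sum, dotProduct_mulVec_mesAC]

/-- Strict monogamy of the singlet fraction: for every tripartite density matrix `ρ` on
A ⊗ B ⊗ C, `F(tr_C ρ) + F(tr_B ρ) < 2`; equivalently, the reduced states on A ⊗ B and
A ⊗ C cannot both be maximally entangled. -/
theorem singlet_fraction_monogamy (d : ℕ) (hd : 2 ≤ d) (ρ : Matrix (I3 d) (I3 d) ℂ)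
    (hpsd : ρ.PosSemidef) (htr : ρ.trace = 1) :
    (singletFraction d (trC d ρ)).re + (singletFraction d (trB d ρ)).re < 2 := by
  have hd₀ : d ≠ 0 := by omega
  have hinv : (d : ℝ)⁻¹ < 1 := inv_lt_one_of_one_lt₀ (by exact_mod_cast hd)
  have hbound := hpsd.sum_re_dotProduct_mulVec_le (Sum.elim (mesAB d) (mesAC d))
    (c := 1 + (d : ℝ)⁻¹) fun x => by
      simpa only [Fintype.sum_sum_type, Sum.elim_inl, Sum.elim_inr, Finset.sum_add_distrib] using
        (orthonormal_mesAB hd₀).sum_norm_inner_sq_add_le (t := (d : ℝ)⁻¹) (orthonormal_mesAC hd₀)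
          (inner_mesAB_mesAC d) (inv_nonneg.mpr d.cast_nonneg) hinv x
  simp only [Fintype.sum_sum_type, Sum.elim_inl, Sum.elim_inr, htr, RCLike.re_to_complex,
    Complex.one_re, mul_one] at hbound
  rw [singletFraction_trC, singletFraction_trB, Complex.re_sum, Complex.re_sum]
  linarith
end
end
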